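/- arXiv:math/9410203 — 4 statements merged into one kernel-verified Lean document; each statement's English description precedes it below -/
import Mathlib

section
/- Let X be a real Banach space and suppose the identity operator on X is (2,1)-summing (i.e. X has the Orlicz property). Then there is no strongly measurable Pettis integrable function f : [0,1] → X satisfying ‖P-∫_I f dμ‖_X ≥ μ(I)^{1/2} for every interval I contained in [0,1]. -/
open MeasureTheory Filter Set
open scoped ENNReal NNReal Topology

/-- Lebesgue measure on `[0,1]`. -/
noncomputable def mu01 : Measure ℝ := volume.restrict (Set.Icc 0 1)

/-- `x` is the Pettis integral of `f` over the set `E` (w.r.t. the measure `μ`). -/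
def IsPettisIntegralOn {X : Type*} [NormedAddCommGroup X] [NormedSpace ℝ X]
    (f : ℝ → X) (μ : Measure ℝ) (E : Set ℝ) (x : X) : Prop :=
  ∀ φ : X →L[ℝ] ℝ, φ x = ∫ ω in E, φ (f ω) ∂μ

/-- `f` is Pettis integrable w.r.t. `μ`. -/
def PettisIntegrable {X : Type*} [NormedAddCommGroup X] [NormedSpace ℝ X]
    (f : ℝ → X) (μ : Measure ℝ) : Prop :=
  (∀ φ : X →L[ℝ] ℝ, Integrable (fun ω => φ (f ω)) μ) ∧
  ∀ E : Set ℝ, MeasurableSet E → ∃ x : X, IsPettisIntegralOn f μ E x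

/-- The identity operator on `X` is `(q,1)`-summing. -/
def IdSumming (X : Type*) [NormedAddCommGroup X] [NormedSpace ℝ X] (q : ℝ) : Prop :=
  ∃ C : ℝ, ∀ (n : ℕ) (x : Fin n → X),
    (∑ i, ‖x i‖ ^ q) ^ (1 / q) ≤
      C * ⨆ φ : {φ : X →L[ℝ] ℝ // ‖φ‖ ≤ 1}, ∑ i, |φ.1 (x i)|


/-!
Write `ν E` for the Pettis integral of `f` over `E`. By Banach–Steinhaus `ν` is bounded, and for
disjoint `E₁, …, Eₙ` every partial sum `∑_{i ∈ s} ν Eᵢ` is again a value of `ν`, so the weak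
`ℓ¹`-norm of `(ν Eᵢ)ᵢ` is at most `2 sup ‖ν‖`; the Orlicz property then makes `‖ν Eₖ‖`
square-summable along every disjoint sequence. On the other hand, cut `[0,1]` into `(2m+1)²`
intervals: on each of them the part where `‖f‖ ≤ m` contributes at most `m/(2m+1)²`, less than half
the lower bound `1/(2m+1)`, so the Orlicz property again gives subsets of `{m < ‖f‖}` whose Pettis
integral has norm at least a fixed `ε > 0`. As these superlevel sets shrink to `∅`, a norming
functional lets us trim such a set to a shell `{m < ‖f‖ ≤ N}` keeping norm `ε/2`, and shells between
increasing levels are disjoint: a contradiction.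
-/

open Function

section Pettis

variable {X : Type*} [NormedAddCommGroup X] [NormedSpace ℝ X] {f : ℝ → X} {μ : Measure ℝ}
  {s t : Set ℝ} {x y : X}

theorem IsPettisIntegralOn.congr_set_ae (hx : IsPettisIntegralOn f μ s x) (hst : s =ᵐ[μ] t) :
    IsPettisIntegralOn f μ t x :=
  fun φ => (hx φ).trans (setIntegral_congr_set hst)

theorem IsPettisIntegralOn.union (hint : ∀ φ : X →L[ℝ] ℝ, Integrable (fun ω => φ (f ω)) μ)
    (hx : IsPettisIntegralOn f μ s x) (hy : IsPettisIntegralOn f μ t y) (hst : Disjoint s t)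
    (ht : MeasurableSet t) : IsPettisIntegralOn f μ (s ∪ t) (x + y) := fun φ => by
  rw [map_add, hx, hy, setIntegral_union hst ht (hint φ).integrableOn (hint φ).integrableOn]

theorem IsPettisIntegralOn.biUnion_finset {ι : Type*} {E : ι → Set ℝ} {x : ι → X}
    (hint : ∀ φ : X →L[ℝ] ℝ, Integrable (fun ω => φ (f ω)) μ) (hE : ∀ i, MeasurableSet (E i))
    (hd : Pairwise (Disjoint on E)) (hx : ∀ i, IsPettisIntegralOn f μ (E i) (x i))
    (u : Finset ι) : IsPettisIntegralOn f μ (⋃ i ∈ u, E i) (∑ i ∈ u, x i) := fun φ => by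
  rw [map_sum, integral_biUnion_finset u (fun i _ => hE i) (hd.set_pairwise _)
    (fun i _ => (hint φ).integrableOn)]
  exact Finset.sum_congr rfl fun i _ => hx i φ

theorem IsPettisIntegralOn.norm_le (hx : IsPettisIntegralOn f μ s x) (hs : μ s < ∞) {K : ℝ}
    (hK : 0 ≤ K) (hf : ∀ ω ∈ s, ‖f ω‖ ≤ K) : ‖x‖ ≤ K * μ.real s := by
  refine NormedSpace.norm_le_dual_bound ℝ x (by positivity) fun φ => ?_
  calc ‖φ x‖ ≤ ‖φ‖ * K * μ.real s := by
        rw [hx φ]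
        exact norm_setIntegral_le_of_norm_le_const hs fun ω hω => φ.le_opNorm_of_le (hf ω hω)
    _ = K * μ.real s * ‖φ‖ := by ring

theorem exists_forall_isPettisIntegralOn_norm_le
    (hint : ∀ φ : X →L[ℝ] ℝ, Integrable (fun ω => φ (f ω)) μ) :
    ∃ M, ∀ s x, IsPettisIntegralOn f μ s x → ‖x‖ ≤ M := by
  let P := {p : Set ℝ × X // IsPettisIntegralOn f μ p.1 p.2}
  have hbdd : ∀ φ : X →L[ℝ] ℝ,
      ∃ K, ∀ p : P, ‖NormedSpace.inclusionInDoubleDualLi ℝ p.1.2 φ‖ ≤ K := fun φ =>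
    ⟨∫ ω, ‖φ (f ω)‖ ∂μ, fun ⟨(s, x), hx⟩ => by
      change ‖φ x‖ ≤ _
      rw [hx φ]
      exact (norm_integral_le_integral_norm _).trans
        (setIntegral_le_integral (hint φ).norm (.of_forall fun _ => norm_nonneg _))⟩
  obtain ⟨M, hM⟩ := banach_steinhaus hbdd
  exact ⟨M, fun s x hx => (NormedSpace.inclusionInDoubleDualLi ℝ).norm_map x ▸ hM ⟨(s, x), hx⟩⟩

end Pettis

section Orlicz

variable {X : Type*} [NormedAddCommGroup X] [NormedSpace ℝ X]

variable (X) in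
def IsOrliczConstant (C : ℝ) : Prop :=
  0 ≤ C ∧ ∀ (n : ℕ) (x : Fin n → X),
    √(∑ i, ‖x i‖ ^ 2) ≤ C * ⨆ φ : {φ : X →L[ℝ] ℝ // ‖φ‖ ≤ 1}, ∑ i, |φ.1 (x i)|

theorem IdSumming.exists_isOrliczConstant (h : IdSumming X 2) : ∃ C, IsOrliczConstant X C := by
  obtain ⟨C, hC⟩ := h
  refine ⟨max C 0, le_max_right _ _, fun n x => ?_⟩
  have hsup : 0 ≤ ⨆ φ : {φ : X →L[ℝ] ℝ // ‖φ‖ ≤ 1}, ∑ i, |φ.1 (x i)| :=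
    Real.iSup_nonneg fun _ => Finset.sum_nonneg fun _ _ => abs_nonneg _
  calc √(∑ i, ‖x i‖ ^ 2) = (∑ i, ‖x i‖ ^ (2 : ℝ)) ^ (1 / 2 : ℝ) := by
        simp only [Real.sqrt_eq_rpow, Real.rpow_two, one_div]
    _ ≤ C * _ := hC n x
    _ ≤ max C 0 * _ := mul_le_mul_of_nonneg_right (le_max_left _ _) hsup

theorem iSup_sum_abs_le_two_mul_of_norm_sum_le {ι : Type*} [Fintype ι] (x : ι → X) {R : ℝ}
    (hR : ∀ s : Finset ι, ‖∑ i ∈ s, x i‖ ≤ R) :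
    ⨆ φ : {φ : X →L[ℝ] ℝ // ‖φ‖ ≤ 1}, ∑ i, |φ.1 (x i)| ≤ 2 * R := by
  classical
  have : Nonempty {φ : X →L[ℝ] ℝ // ‖φ‖ ≤ 1} := ⟨⟨0, by simp⟩⟩
  refine ciSup_le fun ⟨φ, hφ⟩ => ?_
  have hpart : ∀ s : Finset ι, |∑ i ∈ s, φ (x i)| ≤ R := fun s => by
    rw [← map_sum, ← Real.norm_eq_abs]
    exact (φ.le_of_opNorm_le hφ _).trans (by simpa using hR s)
  set P := Finset.univ.filter fun i => 0 ≤ φ (x i)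
  set N := Finset.univ.filter fun i => ¬0 ≤ φ (x i)
  calc ∑ i, |φ (x i)| = ∑ i ∈ P, φ (x i) + -∑ i ∈ N, φ (x i) := by
        rw [← Finset.sum_filter_add_sum_filter_not _ (fun i => 0 ≤ φ (x i)),
          ← Finset.sum_neg_distrib]
        congr 1 <;> refine Finset.sum_congr rfl fun i hi => ?_
        · exact abs_of_nonneg (Finset.mem_filter.1 hi).2
        · exact abs_of_neg (not_le.1 (Finset.mem_filter.1 hi).2)
    _ ≤ R + R := add_le_add (le_abs_self _ |>.trans (hpart P)) (neg_le_abs _ |>.trans (hpart N))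
    _ = 2 * R := by ring

end Orlicz

section OrliczPettis

variable {X : Type*} [NormedAddCommGroup X] [NormedSpace ℝ X] {f : ℝ → X} {μ : Measure ℝ}
  {C : ℝ}

theorem IsOrliczConstant.sqrt_sum_sq_norm_le (hC : IsOrliczConstant X C)
    (hint : ∀ φ : X →L[ℝ] ℝ, Integrable (fun ω => φ (f ω)) μ) {n : ℕ} {E : Fin n → Set ℝ}
    {x : Fin n → X} (hE : ∀ i, MeasurableSet (E i)) (hd : Pairwise (Disjoint on E))
    (hx : ∀ i, IsPettisIntegralOn f μ (E i) (x i)) {R : ℝ}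
    (hR : ∀ S ⊆ ⋃ i, E i, MeasurableSet S → ∀ y, IsPettisIntegralOn f μ S y → ‖y‖ ≤ R) :
    √(∑ i, ‖x i‖ ^ 2) ≤ C * (2 * R) := by
  refine (hC.2 n x).trans (mul_le_mul_of_nonneg_left ?_ hC.1)
  refine iSup_sum_abs_le_two_mul_of_norm_sum_le x fun s => hR (⋃ i ∈ s, E i) ?_ ?_ _ ?_
  · exact iUnion₂_subset fun i _ => subset_iUnion E i
  · exact s.measurableSet_biUnion fun i _ => hE i
  · exact .biUnion_finset hint hE hd hx s

theorem IsOrliczConstant.summable_sq_norm (hC : IsOrliczConstant X C)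
    (hint : ∀ φ : X →L[ℝ] ℝ, Integrable (fun ω => φ (f ω)) μ) {E : ℕ → Set ℝ} {x : ℕ → X}
    (hE : ∀ k, MeasurableSet (E k)) (hd : Pairwise (Disjoint on E))
    (hx : ∀ k, IsPettisIntegralOn f μ (E k) (x k)) : Summable fun k => ‖x k‖ ^ 2 := by
  obtain ⟨M, hM⟩ := exists_forall_isPettisIntegralOn_norm_le hint
  refine summable_of_sum_range_le (c := (C * (2 * M)) ^ 2) (fun k => sq_nonneg _) fun n => ?_
  have h := hC.sqrt_sum_sq_norm_le hint (fun i : Fin n => hE i)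
    (hd.comp_of_injective Fin.val_injective) (fun i => hx i) fun S _ _ y hy => hM S y hy
  rw [Fin.sum_univ_eq_sum_range (fun k => ‖x k‖ ^ 2)] at h
  exact (Real.sqrt_le_iff.1 h).2

end OrliczPettis

theorem tendsto_setIntegral_natCast_lt_atTop {α G : Type*} [MeasurableSpace α]
    [NormedAddCommGroup G] [NormedSpace ℝ G] {μ : Measure α} {r : α → ℝ} {g : α → G}
    (hr : Measurable r) (hg : Integrable g μ) :
    Tendsto (fun N : ℕ => ∫ a in {a | (N : ℝ) < r a}, g a ∂μ) atTop (𝓝 0) := by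
  have hempty : ⋂ N : ℕ, {a | (N : ℝ) < r a} = ∅ := eq_empty_of_forall_notMem fun a ha => by
    obtain ⟨N, hN⟩ := exists_nat_ge (r a)
    exact (mem_iInter.1 ha N).not_ge hN
  have hanti : Antitone fun N : ℕ => {a | (N : ℝ) < r a} :=
    fun _ _ hij _ ha => (Nat.mono_cast hij).trans_lt (α := ℝ) ha
  simpa [hempty] using tendsto_setIntegral_of_antitone
    (fun N => measurableSet_lt measurable_const hr) hanti ⟨0, hg.integrableOn⟩

theorem IsPettisIntegralOn.exists_sdiff_superlevel {X : Type*} [NormedAddCommGroup X]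
    [NormedSpace ℝ X] {f : ℝ → X} {μ : Measure ℝ} {ε : ℝ} (hfm : Measurable fun ω => ‖f ω‖)
    (hf : PettisIntegrable f μ) {E : Set ℝ} {x : X} (hE : MeasurableSet E)
    (hx : IsPettisIntegralOn f μ E x) (hε : 0 < ε) (hεx : ε ≤ ‖x‖) (m : ℕ) :
    ∃ N > m, ∃ y, IsPettisIntegralOn f μ (E \ {ω | (N : ℝ) < ‖f ω‖}) y ∧ ε / 2 ≤ ‖y‖ := by
  obtain ⟨φ, hφ, hφx⟩ := exists_dual_vector'' ℝ x
  obtain ⟨N, hN, hNm⟩ := (((tendsto_setIntegral_natCast_lt_atTop hfm (hf.1 φ).norm).eventually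
    (gt_mem_nhds (half_pos hε))).and (eventually_gt_atTop m)).exists
  set B := {ω | (N : ℝ) < ‖f ω‖}
  have hB : MeasurableSet B := measurableSet_lt measurable_const hfm
  obtain ⟨y, hy⟩ := hf.2 _ (hE.diff hB)
  refine ⟨N, hNm, y, hy, ?_⟩
  have hsplit := integral_inter_add_sdiff hB (hf.1 φ).integrableOn (s := E)
  -- `φ` norms `x`, and the part of `E` inside `B` is negligible for `φ ∘ f`
  have hsmall : ‖∫ ω in E ∩ B, φ (f ω) ∂μ‖ ≤ ε / 2 :=
    (norm_integral_le_integral_norm _).trans <| (setIntegral_mono_set (hf.1 φ).norm.integrableOn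
      (.of_forall fun _ => norm_nonneg _) inter_subset_right.eventuallyLE).trans hN.le
  calc ε / 2 ≤ φ y := by
        have hφE : ‖x‖ = ∫ ω in E, φ (f ω) ∂μ := by simpa [hφx] using hx φ
        rw [hy φ]
        linarith [le_abs_self (∫ ω in E ∩ B, φ (f ω) ∂μ), Real.norm_eq_abs _ ▸ hsmall]
    _ ≤ ‖y‖ := (le_abs_self _).trans ((φ.le_of_opNorm_le hφ y).trans_eq (one_mul _))

theorem exists_pairwise_disjoint_isPettisIntegralOn_le_norm {X : Type*} [NormedAddCommGroup X]
    [NormedSpace ℝ X] {f : ℝ → X} {μ : Measure ℝ} {ε : ℝ} (hfm : Measurable fun ω => ‖f ω‖)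
    (hf : PettisIntegrable f μ) (hε : 0 < ε)
    (hlarge : ∀ m : ℕ, ∃ E ⊆ {ω | (m : ℝ) < ‖f ω‖}, MeasurableSet E ∧
      ∃ x, IsPettisIntegralOn f μ E x ∧ ε ≤ ‖x‖) :
    ∃ (F : ℕ → Set ℝ) (x : ℕ → X), (∀ k, MeasurableSet (F k)) ∧ Pairwise (Disjoint on F) ∧
      ∀ k, IsPettisIntegralOn f μ (F k) (x k) ∧ ε / 2 ≤ ‖x k‖ := by
  choose E hEB hE x hx hεx using hlarge
  choose N hN y hy hεy using fun m => (hx m).exists_sdiff_superlevel hfm hf (hE m) hε (hεx m) m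
  set B : ℕ → Set ℝ := fun m => {ω | (m : ℝ) < ‖f ω‖}
  set s : ℕ → ℕ := fun k => N^[k] 0
  have hs_succ : ∀ k, s (k + 1) = N (s k) := fun k => iterate_succ_apply' N k 0
  have hs : StrictMono s := strictMono_nat_of_lt_succ fun k => hs_succ k ▸ hN (s k)
  refine ⟨fun k => E (s k) \ B (N (s k)), fun k => y (s k),
    fun k => (hE _).diff (measurableSet_lt measurable_const hfm), ?_,
    fun k => ⟨hy (s k), hεy (s k)⟩⟩
  refine (pairwise_disjoint_on _).2 fun k l hkl => disjoint_left.2 fun ω hωk hωl => hωk.2 ?_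
  have hkl' : N (s k) ≤ s l := hs_succ k ▸ hs.monotone hkl
  exact (Nat.mono_cast hkl').trans_lt (α := ℝ) (hEB (s l) hωl.1)

instance : IsFiniteMeasure mu01 := by unfold mu01; infer_instance

instance : NullSingletonClass mu01 := by unfold mu01; infer_instance

theorem exists_subset_superlevel_isPettisIntegralOn_le_norm {X : Type*} [NormedAddCommGroup X]
    [NormedSpace ℝ X] {f : ℝ → X} {C ε : ℝ} (hC : IsOrliczConstant X C)
    (hfm : Measurable fun ω => ‖f ω‖) (hf : PettisIntegrable f mu01)
    (hlow : ∀ a b : ℝ, 0 ≤ a → a ≤ b → b ≤ 1 →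
      ∀ x : X, IsPettisIntegralOn f mu01 (Icc a b) x → (b - a) ^ ((1 : ℝ) / 2) ≤ ‖x‖)
    (hε : 4 * C * ε < 1) (m : ℕ) :
    ∃ E ⊆ {ω | (m : ℝ) < ‖f ω‖}, MeasurableSet E ∧
      ∃ x, IsPettisIntegralOn f mu01 E x ∧ ε ≤ ‖x‖ := by
  by_contra! hsmall
  set B := {ω | (m : ℝ) < ‖f ω‖}
  have hB : MeasurableSet B := measurableSet_lt measurable_const hfm
  set k : ℕ := 2 * m + 1
  have hk : (k : ℝ) = 2 * m + 1 := by push_cast [k]; ring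
  have hk0 : (0 : ℝ) < k := by positivity
  set I : Fin (k ^ 2) → Set ℝ := fun i => Ioc (i / k ^ 2) ((i + 1) / k ^ 2)
  have hI : ∀ i, MeasurableSet (I i) := fun i => measurableSet_Ioc
  have hId : Pairwise (Disjoint on I) := by
    have hmono : Monotone fun j : ℕ => (j : ℝ) / k ^ 2 :=
      fun _ _ hab => div_le_div_of_nonneg_right (Nat.mono_cast hab) (by positivity)
    simpa [I, Function.onFun] using
      hmono.pairwise_disjoint_on_Ioc_succ.comp_of_injective Fin.val_injective
  choose x hx using fun i => hf.2 (I i ∩ B) ((hI i).inter hB)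
  choose y hy using fun i => hf.2 (I i \ B) ((hI i).diff hB)
  have hxy : ∀ i, 1 / k ≤ ‖x i + y i‖ := fun i => by
    have hsum := ((hx i).union hf.1 (hy i) disjoint_inf_sdiff ((hI i).diff hB)).congr_set_ae
      (by rw [inter_union_sdiff]; exact Ioc_ae_eq_Icc)
    have h := hlow (i / k ^ 2) ((i + 1) / k ^ 2) (by positivity)
      (div_le_div_of_nonneg_right (by linarith) (by positivity))
      (by rw [div_le_one (by positivity)]; exact_mod_cast i.isLt) _ hsum
    have hlen : ((i : ℝ) + 1) / k ^ 2 - i / k ^ 2 = (1 / k) ^ 2 := by ring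
    rwa [hlen, ← Real.sqrt_eq_rpow, Real.sqrt_sq (by positivity)] at h
  have hy_le : ∀ i, ‖y i‖ ≤ m / k ^ 2 := fun i => by
    have hμ : mu01.real (I i \ B) ≤ 1 / k ^ 2 := by
      refine ENNReal.toReal_le_of_le_ofReal (by positivity) ?_
      calc mu01 (I i \ B) ≤ volume (I i) :=
            Measure.restrict_apply_le _ _ |>.trans (measure_mono sdiff_subset)
        _ = ENNReal.ofReal (1 / k ^ 2) := by rw [Real.volume_Ioc]; congr 1; ring
    calc ‖y i‖ ≤ m * mu01.real (I i \ B) := (hy i).norm_le (measure_lt_top _ _)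
          (Nat.cast_nonneg m) fun ω hω => not_lt.1 hω.2
      _ ≤ m * (1 / k ^ 2) := mul_le_mul_of_nonneg_left hμ (Nat.cast_nonneg m)
      _ = m / k ^ 2 := mul_one_div _ _
  have hx_ge : ∀ i, 1 / (2 * k) ≤ ‖x i‖ := fun i => by
    have hmk : (m : ℝ) / k ^ 2 ≤ 1 / k - 1 / (2 * k) := by
      rw [div_le_iff₀ (by positivity)]; field_simp; rw [hk]; linarith
    linarith [norm_add_le (x i) (y i), hxy i, hy_le i]
  have hsq : (1 / 2 : ℝ) ≤ √(∑ i, ‖x i‖ ^ 2) := by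
    refine Real.le_sqrt_of_sq_le ?_
    calc (1 / 2 : ℝ) ^ 2 = ∑ _i : Fin (k ^ 2), (1 / (2 * k : ℝ)) ^ 2 := by
          simp only [Finset.sum_const, Finset.card_univ, Fintype.card_fin, nsmul_eq_mul]
          field_simp; push_cast; ring
      _ ≤ ∑ i, ‖x i‖ ^ 2 :=
          Finset.sum_le_sum fun i _ => pow_le_pow_left₀ (by positivity) (hx_ge i) 2
  have hupper := hC.sqrt_sum_sq_norm_le hf.1 (fun i => (hI i).inter hB)
    (fun i j hij => (hId hij).mono inter_subset_left inter_subset_left) hx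
    fun S hS hSm z hz =>
      (hsmall S (hS.trans (iUnion_subset fun i => inter_subset_right)) hSm z hz).le
  linarith

theorem statement4_general {X : Type*} [NormedAddCommGroup X] [NormedSpace ℝ X]
    (hOrlicz : IdSumming X 2) :
    ¬ ∃ f : ℝ → X, StronglyMeasurable f ∧ PettisIntegrable f mu01 ∧
        ∀ a b : ℝ, 0 ≤ a → a ≤ b → b ≤ 1 →
          ∀ x : X, IsPettisIntegralOn f mu01 (Set.Icc a b) x → (b - a) ^ ((1 : ℝ) / 2) ≤ ‖x‖ := by
  rintro ⟨f, hfm, hf, hlow⟩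
  obtain ⟨C, hC⟩ := hOrlicz.exists_isOrliczConstant
  set ε := 1 / (4 * C + 1)
  have hε : 0 < ε := by have := hC.1; positivity
  have hεC : 4 * C * ε < 1 := by
    rw [mul_one_div, div_lt_one (by linarith [hC.1])]; linarith
  obtain ⟨F, x, hF, hFd, hx⟩ := exists_pairwise_disjoint_isPettisIntegralOn_le_norm
    hfm.norm.measurable hf hε
    (exists_subset_superlevel_isPettisIntegralOn_le_norm hC hfm.norm.measurable hf hlow hεC)
  have hlim := (hC.summable_sq_norm hf.1 hF hFd fun k => (hx k).1).tendsto_atTop_zero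
  have hbelow : ∀ k, (ε / 2) ^ 2 ≤ ‖x k‖ ^ 2 :=
    fun k => pow_le_pow_left₀ (by positivity) (hx k).2 2
  exact (ge_of_tendsto' hlim hbelow).not_gt (by positivity)

theorem statement4 {X : Type*} [NormedAddCommGroup X] [NormedSpace ℝ X] [CompleteSpace X]
    (hOrlicz : IdSumming X 2) :
    ¬ ∃ f : ℝ → X, StronglyMeasurable f ∧ PettisIntegrable f mu01 ∧
        ∀ a b : ℝ, 0 ≤ a → a ≤ b → b ≤ 1 →
          ∀ x : X, IsPettisIntegralOn f mu01 (Set.Icc a b) x → (b - a) ^ ((1 : ℝ) / 2) ≤ ‖x‖ :=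
  statement4_general hOrlicz
end

section
/- Let X be an infinite-dimensional real Banach space and let ψ : [0,∞) → [0,∞) be an increasing function with ψ(s) → 0 as s → 0⁺. Then there exists a continuous function f : [0,1] → X such that ‖f(s) − f(t)‖_X ≥ ψ(|s − t|) for all s, t ∈ [0,1]. -/
/-!
Riesz's lemma and Hahn–Banach give unit vectors `xₖ` and functionals `φₖ` with `‖φₖ‖ ≤ 2`,
`φₖ xₖ = 1` and `φₖ xᵢ = 0` for `i < k`. Take `f = ∑ₙ 64⁻ⁿ γₙ`, where `γₙ` runs at speed `2 / ρₙ`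
along the polygon through a block of vectors `xₖ` used by no other layer. If `t - s ≥ ρₙ`, test
`f s - f t` against `φₖ` for the vertex `k` just below or just above the position of `γₙ t`: the
layers below `n` are annihilated, layer `n` contributes at least `64⁻ⁿ / 4`, and the layers above
`n` at most `4 · 64⁻ⁿ / 63`, so `‖f s - f t‖ ≥ 64⁻ⁿ / 16`. It remains to choose `ρₙ → 0` with
`ψ ρₙ` below the bound of layer `n + 1`.
-/

open MeasureTheory Filter Set
open scoped Topology

open Finset

section

variable {X : Type*} [NormedAddCommGroup X] [NormedSpace ℝ X]

theorem Submodule.exists_norm_eq_one_dual_vanishing {V : Submodule ℝ X}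
    (hVc : IsClosed (V : Set X)) (hV : V ≠ ⊤) {r : ℝ} (hr₀ : 0 < r) (hr₁ : r < 1) :
    ∃ (u : X) (φ : X →L[ℝ] ℝ), ‖u‖ = 1 ∧ ‖φ‖ ≤ r⁻¹ ∧ φ u = 1 ∧ ∀ y ∈ V, φ y = 0 := by
  obtain ⟨u, -, hu, hsep⟩ :=
    riesz_lemma_of_lt_one hVc (SetLike.exists_not_mem_of_ne_top V hV rfl) hr₁
  have hdist : r ≤ ‖V.mkQ u‖ :=
    calc r ≤ Metric.infDist u V := (Metric.le_infDist ⟨0, V.zero_mem⟩).2 fun y hy => by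
          simpa [dist_eq_norm] using hsep y hy
      _ = ‖V.mkQ u‖ := (QuotientAddGroup.norm_mk (S := V.toAddSubgroup) u).symm
  obtain ⟨g, hg, hgu⟩ := exists_dual_vector ℝ (V.mkQ u) (by linarith)
  refine ⟨u, ‖V.mkQ u‖⁻¹ • g.comp V.mkQL, hu, ?_, ?_, fun y hy => ?_⟩
  · have hq : ‖V.mkQL‖ ≤ 1 :=
      ContinuousLinearMap.opNorm_le_bound _ zero_le_one fun x => by
        simpa using Submodule.Quotient.norm_mk_le V x
    calc ‖‖V.mkQ u‖⁻¹ • g.comp V.mkQL‖ ≤ ‖V.mkQ u‖⁻¹ * (‖g‖ * ‖V.mkQL‖) := by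
          rw [norm_smul, norm_inv, norm_norm]
          gcongr
          exact g.opNorm_comp_le _
      _ ≤ r⁻¹ := by
          rw [hg, one_mul]
          exact mul_le_of_le_one_right (by positivity) hq |>.trans (inv_anti₀ hr₀ hdist)
  · rw [smul_apply, ContinuousLinearMap.comp_apply, Submodule.mkQL_apply, hgu, smul_eq_mul]
    exact inv_mul_cancel₀ (hr₀.trans_le hdist).ne'
  · simp [(Submodule.Quotient.mk_eq_zero V).2 hy]

structure TriangularSystem (X : Type*) [NormedAddCommGroup X] [NormedSpace ℝ X] where
  vec : ℕ → X
  fn : ℕ → X →L[ℝ] ℝ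
  norm_vec : ∀ n, ‖vec n‖ = 1
  norm_fn_le : ∀ n, ‖fn n‖ ≤ 2
  fn_vec_self : ∀ n, fn n (vec n) = 1
  fn_vec_of_lt : ∀ {m n}, m < n → fn n (vec m) = 0

theorem exists_triangularSystem (hX : ¬ FiniteDimensional ℝ X) :
    Nonempty (TriangularSystem X) := by
  classical
  have step (s : Finset X) : ∃ p : X × (X →L[ℝ] ℝ), ‖p.1‖ = 1 ∧ ‖p.2‖ ≤ 2 ∧ p.2 p.1 = 1 ∧
      ∀ y ∈ Submodule.span ℝ (s : Set X), p.2 y = 0 := by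
    have hne : Submodule.span ℝ (s : Set X) ≠ ⊤ := fun h => hX (Module.finite_def.2 ⟨s, h⟩)
    obtain ⟨u, φ, h⟩ := Submodule.exists_norm_eq_one_dual_vanishing
      (Submodule.closed_of_finiteDimensional _) hne (r := 2⁻¹) (by norm_num) (by norm_num)
    exact ⟨(u, φ), by simpa using h⟩
  choose next hnext using step
  let F : ℕ → Finset X := fun n => Nat.rec ∅ (fun _ s => insert (next s).1 s) n
  have hF : Monotone F := monotone_nat_of_le_succ fun n => Finset.subset_insert _ _
  exact ⟨{
    vec := fun n => (next (F n)).1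
    fn := fun n => (next (F n)).2
    norm_vec := fun n => (hnext (F n)).1
    norm_fn_le := fun n => (hnext (F n)).2.1
    fn_vec_self := fun n => (hnext (F n)).2.2.1
    fn_vec_of_lt := fun {m n} hmn => (hnext (F n)).2.2.2 _
      (Submodule.subset_span (hF (Nat.succ_le_of_lt hmn) (Finset.mem_insert_self _ _))) }⟩

end

noncomputable def hat (u : ℝ) : ℝ := max 0 (1 - |u|)

lemma hat_nonneg (u : ℝ) : 0 ≤ hat u := le_max_left _ _

@[fun_prop]
lemma continuous_hat : Continuous hat := by unfold hat; fun_prop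

lemma hat_eq_zero {u : ℝ} (h : 1 ≤ |u|) : hat u = 0 := max_eq_left (by linarith)

lemma hat_of_abs_le_one {u : ℝ} (h : |u| ≤ 1) : hat u = 1 - |u| := max_eq_right (by linarith)

lemma hat_le_one (u : ℝ) : hat u ≤ 1 := max_le zero_le_one (by linarith [abs_nonneg u])

lemma hat_add_hat_sub_one_le (v : ℝ) : hat v + hat (v - 1) ≤ 1 := by
  rcases le_or_gt v 0 with h | h
  · rw [hat_eq_zero (u := v - 1) (by rw [abs_of_neg (by linarith)]; linarith), add_zero]
    exact hat_le_one v
  rcases le_or_gt v 1 with h' | h'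
  · rw [hat_of_abs_le_one (by rw [abs_of_pos h]; linarith),
      hat_of_abs_le_one (by rw [abs_of_nonpos (by linarith)]; linarith),
      abs_of_pos h, abs_of_nonpos (by linarith)]
    linarith
  · rw [hat_eq_zero (u := v) (by rw [abs_of_pos h]; linarith), zero_add]
    exact hat_le_one _

lemma floor_le_and_le_floor_add_one_of_hat_sub_ne_zero {u : ℝ} {m : ℕ} (h : hat (u - m) ≠ 0) :
    ⌊u⌋₊ ≤ m ∧ m ≤ ⌊u⌋₊ + 1 := by
  have h1 : |u - m| < 1 := not_le.1 fun h' => h (hat_eq_zero h')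
  rw [abs_lt] at h1
  constructor
  · exact Nat.lt_succ_iff.1 ((Nat.floor_lt' m.succ_ne_zero).2 (by push_cast; linarith))
  · have := Nat.lt_floor_add_one u
    exact Nat.lt_succ_iff.1 (by exact_mod_cast (by linarith : (m : ℝ) < ⌊u⌋₊ + 1 + 1))

lemma sum_hat_sub_le_one (F : Finset ℕ) (u : ℝ) : ∑ m ∈ F, hat (u - m) ≤ 1 := by
  classical
  calc ∑ m ∈ F, hat (u - m) = ∑ m ∈ F.filter (fun m : ℕ => hat (u - m) ≠ 0), hat (u - m) :=
        (sum_filter_ne_zero F).symm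
    _ ≤ ∑ m ∈ {⌊u⌋₊, ⌊u⌋₊ + 1}, hat (u - m) := by
        refine sum_le_sum_of_subset_of_nonneg (fun m hm => ?_) fun m _ _ => hat_nonneg _
        obtain ⟨h1, h2⟩ := floor_le_and_le_floor_add_one_of_hat_sub_ne_zero (mem_filter.1 hm).2
        rcases h1.eq_or_lt with h | h
        · simp [h]
        · simp [show m = ⌊u⌋₊ + 1 by omega]
    _ ≤ 1 := by
        rw [sum_pair (by omega), Nat.cast_succ, ← sub_sub]
        exact hat_add_hat_sub_one_le _

lemma hat_sub_floor {u : ℝ} (hu : 0 ≤ u) : hat (u - ⌊u⌋₊) = 1 - (u - ⌊u⌋₊) := by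
  have h0 := Nat.floor_le hu
  have h1 := Nat.lt_floor_add_one u
  rw [hat_of_abs_le_one, abs_of_nonneg] <;> [linarith; rw [abs_of_nonneg] <;> linarith]

lemma hat_sub_floor_add_one {u : ℝ} (hu : 0 ≤ u) :
    hat (u - (⌊u⌋₊ + 1 : ℕ)) = u - ⌊u⌋₊ := by
  have h0 := Nat.floor_le hu
  have h1 := Nat.lt_floor_add_one u
  push_cast
  rw [hat_of_abs_le_one, abs_of_nonpos] <;> [ring; linarith; rw [abs_of_nonpos] <;> linarith]

section PolygonalPath

variable {X : Type*} [NormedAddCommGroup X] [NormedSpace ℝ X]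

noncomputable def polygonalPath (y : ℕ → X) (N : ℕ) (u : ℝ) : X :=
  ∑ m ∈ range N, hat (u - m) • y m

lemma continuous_polygonalPath (y : ℕ → X) (N : ℕ) : Continuous (polygonalPath y N) := by
  unfold polygonalPath; fun_prop

lemma norm_polygonalPath_le {y : ℕ → X} (hy : ∀ m, ‖y m‖ ≤ 1) (N : ℕ) (u : ℝ) :
    ‖polygonalPath y N u‖ ≤ 1 :=
  calc ‖polygonalPath y N u‖ ≤ ∑ m ∈ range N, ‖hat (u - m) • y m‖ := norm_sum_le _ _
    _ ≤ ∑ m ∈ range N, hat (u - m) := sum_le_sum fun m _ => by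
        rw [norm_smul, Real.norm_of_nonneg (hat_nonneg _)]
        exact mul_le_of_le_one_right (hat_nonneg _) (hy m)
    _ ≤ 1 := sum_hat_sub_le_one _ u

lemma polygonalPath_eq {y : ℕ → X} {N : ℕ} {u : ℝ} (hu : 0 ≤ u) (hN : ⌊u⌋₊ + 1 < N) :
    polygonalPath y N u = (1 - (u - ⌊u⌋₊)) • y ⌊u⌋₊ + (u - ⌊u⌋₊) • y (⌊u⌋₊ + 1) := by
  unfold polygonalPath
  rw [← sum_subset (s₁ := {⌊u⌋₊, ⌊u⌋₊ + 1}), sum_pair (by omega), hat_sub_floor hu,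
    hat_sub_floor_add_one hu]
  · intro m hm
    simp only [Finset.mem_insert, Finset.mem_singleton, Finset.mem_range] at hm ⊢
    omega
  · intro m _ hm
    by_contra h
    obtain ⟨h1, h2⟩ := floor_le_and_le_floor_add_one_of_hat_sub_ne_zero (left_ne_zero_of_smul h)
    simp only [Finset.mem_insert, Finset.mem_singleton] at hm
    omega

lemma map_polygonalPath_eq_zero (ℓ : X →L[ℝ] ℝ) {y : ℕ → X} {N : ℕ} {u : ℝ}
    (h : ∀ m < N, m ≤ ⌊u⌋₊ + 1 → ℓ (y m) = 0) : ℓ (polygonalPath y N u) = 0 := by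
  unfold polygonalPath
  rw [map_sum]
  refine sum_eq_zero fun m hm => ?_
  rw [map_smul, smul_eq_mul]
  by_cases hm' : m ≤ ⌊u⌋₊ + 1
  · rw [h m (mem_range.1 hm) hm', mul_zero]
  · by_contra hne
    exact hm' (floor_le_and_le_floor_add_one_of_hat_sub_ne_zero (left_ne_zero_of_mul hne)).2

end PolygonalPath

lemma sum_range_add_lt_sum_range {N : ℕ → ℕ} {i n m : ℕ} (hin : i < n) (hm : m < N i) :
    ∑ j ∈ range i, N j + m < ∑ j ∈ range n, N j :=
  calc ∑ j ∈ range i, N j + m < ∑ j ∈ range (i + 1), N j := by rw [sum_range_succ]; omega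
    _ ≤ ∑ j ∈ range n, N j := sum_le_sum_of_subset (range_subset_range.2 hin)

namespace TriangularSystem

variable {X : Type*} [NormedAddCommGroup X] [NormedSpace ℝ X] (T : TriangularSystem X)

lemma abs_fn_le (k : ℕ) (v : X) : |T.fn k v| ≤ 2 * ‖v‖ :=
  ((T.fn k).le_opNorm v).trans (mul_le_mul_of_nonneg_right (T.norm_fn_le k) (norm_nonneg v))

lemma exists_le_abs_fn_polygonalPath_sub (o N : ℕ) {s u : ℝ} (hs : 0 ≤ s) (hsu : s + 2 ≤ u)
    (hN : ⌊u⌋₊ + 1 < N) :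
    ∃ j, 1 / 4 ≤ |T.fn (o + j) (polygonalPath (fun m => T.vec (o + m)) N s -
      polygonalPath (fun m => T.vec (o + m)) N u)| := by
  set k := ⌊u⌋₊
  set β := u - k
  have hβ : 0 ≤ β := sub_nonneg.2 (Nat.floor_le (by linarith))
  have hkill (j : ℕ) (hj : k ≤ j) :
      T.fn (o + j) (polygonalPath (fun m => T.vec (o + m)) N s) = 0 := by
    have : ⌊s⌋₊ + 2 ≤ k := (Nat.floor_add_natCast hs 2).symm.trans_le (Nat.floor_mono hsu)
    exact map_polygonalPath_eq_zero _ fun _ _ _ => T.fn_vec_of_lt (by omega)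
  rw [polygonalPath_eq (u := u) (by linarith) hN]
  rcases le_or_gt (1 / 4) β with hβ₁ | hβ₁
  · refine ⟨k + 1, ?_⟩
    rw [map_sub, hkill _ (by omega), map_add, map_smul, map_smul, T.fn_vec_of_lt (by omega),
      T.fn_vec_self]
    simp only [smul_eq_mul, mul_zero, mul_one, zero_add, zero_sub, abs_neg]
    exact hβ₁.trans (le_abs_self _)
  · refine ⟨k, ?_⟩
    rw [map_sub, hkill _ le_rfl, map_add, map_smul, map_smul, T.fn_vec_self, smul_eq_mul,
      smul_eq_mul]
    -- triangularity leaves `q` uncontrolled, but `|q| ≤ 2` suffices as `β < 1 / 4`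
    set q := T.fn (o + k) (T.vec (o + (k + 1)))
    have hq : -2 ≤ q := by
      have := T.abs_fn_le (o + k) (T.vec (o + (k + 1)))
      rw [T.norm_vec, mul_one] at this
      exact (abs_le.1 this).1
    rw [zero_sub, abs_neg]
    refine le_abs.2 (Or.inl ?_)
    nlinarith [mul_nonneg hβ (by linarith : 0 ≤ q + 2)]

noncomputable def blockLength (r : ℝ) : ℕ := ⌊2 / r⌋₊ + 2

noncomputable def layer (ρ : ℕ → ℝ) (n : ℕ) (t : ℝ) : X :=
  polygonalPath (fun m => T.vec (∑ i ∈ range n, blockLength (ρ i) + m)) (blockLength (ρ n))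
    (2 * t / ρ n)

noncomputable def curve (ρ : ℕ → ℝ) (t : ℝ) : X := ∑' n, (64 : ℝ)⁻¹ ^ n • T.layer ρ n t

variable (ρ : ℕ → ℝ)

lemma norm_layer_le (n : ℕ) (t : ℝ) : ‖T.layer ρ n t‖ ≤ 1 :=
  norm_polygonalPath_le (fun _ => (T.norm_vec _).le) _ _

lemma norm_smul_layer_le (n : ℕ) (t : ℝ) : ‖(64 : ℝ)⁻¹ ^ n • T.layer ρ n t‖ ≤ (64 : ℝ)⁻¹ ^ n := by
  rw [norm_smul, Real.norm_of_nonneg (by positivity)]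
  exact mul_le_of_le_one_right (by positivity) (T.norm_layer_le ρ n t)

lemma continuous_layer (n : ℕ) : Continuous (T.layer ρ n) :=
  (continuous_polygonalPath _ _).comp (by fun_prop)

lemma fn_layer_eq_zero {i n k : ℕ} (hin : i < n) (hk : ∑ j ∈ range n, blockLength (ρ j) ≤ k)
    (t : ℝ) : T.fn k (T.layer ρ i t) = 0 :=
  map_polygonalPath_eq_zero _ fun _ hm _ =>
    T.fn_vec_of_lt ((sum_range_add_lt_sum_range hin hm).trans_le hk)

lemma exists_le_abs_fn_layer_sub {n : ℕ} (hρ : 0 < ρ n) {s t : ℝ} (hs : 0 ≤ s) (ht : t ≤ 1)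
    (hst : s + ρ n ≤ t) : ∃ k, ∑ j ∈ range n, blockLength (ρ j) ≤ k ∧
      1 / 4 ≤ |T.fn k (T.layer ρ n s - T.layer ρ n t)| := by
  have hsu : 2 * s / ρ n + 2 ≤ 2 * t / ρ n := by
    rw [div_add' _ _ _ hρ.ne', div_le_div_iff_of_pos_right hρ]; linarith
  have hN : ⌊2 * t / ρ n⌋₊ + 1 < blockLength (ρ n) := by
    have : ⌊2 * t / ρ n⌋₊ ≤ ⌊2 / ρ n⌋₊ := Nat.floor_mono (by gcongr; linarith)
    unfold blockLength; omega
  obtain ⟨j, hj⟩ := T.exists_le_abs_fn_polygonalPath_sub _ _ (by positivity) hsu hN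
  exact ⟨_, le_self_add, hj⟩

variable [CompleteSpace X]

lemma summable_smul_layer (t : ℝ) : Summable fun n => (64 : ℝ)⁻¹ ^ n • T.layer ρ n t :=
  .of_norm_bounded (summable_geometric_of_lt_one (by norm_num) (by norm_num))
    fun n => T.norm_smul_layer_le ρ n t

lemma continuous_curve : Continuous (T.curve ρ) :=
  continuous_tsum (fun n => (T.continuous_layer ρ n).const_smul _)
    (summable_geometric_of_lt_one (by norm_num) (by norm_num)) (T.norm_smul_layer_le ρ)

lemma inv_pow_div_le_norm_curve_sub {n : ℕ} (hρ : 0 < ρ n) {s t : ℝ} (hs : 0 ≤ s) (ht : t ≤ 1)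
    (hst : s + ρ n ≤ t) : (64 : ℝ)⁻¹ ^ n / 16 ≤ ‖T.curve ρ s - T.curve ρ t‖ := by
  set c : ℝ := 64⁻¹
  set D : ℕ → X := fun i => T.layer ρ i s - T.layer ρ i t
  set tail := ∑' i, c ^ (i + (n + 1)) • D (i + (n + 1))
  have hD (i : ℕ) : ‖D i‖ ≤ 2 :=
    (norm_sub_le _ _).trans (by linarith [T.norm_layer_le ρ i s, T.norm_layer_le ρ i t])
  have hsplit : T.curve ρ s - T.curve ρ t = ∑ i ∈ range n, c ^ i • D i + c ^ n • D n + tail := by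
    simp only [tail, D, smul_sub]
    rw [curve, curve, ← (T.summable_smul_layer ρ s).tsum_sub (T.summable_smul_layer ρ t),
      ← sum_range_succ]
    exact (((T.summable_smul_layer ρ s).sub (T.summable_smul_layer ρ t)).sum_add_tsum_nat_add
      (n + 1)).symm
  have htail : ‖tail‖ ≤ 2 * c ^ n / 63 := by
    have hgeom := (hasSum_geometric_of_lt_one (r := c) (by norm_num) (by norm_num)).mul_left
      (2 * c ^ (n + 1))
    refine (tsum_of_norm_bounded hgeom fun i => ?_).trans_eq (by rw [pow_succ]; norm_num; ring)
    rw [norm_smul, Real.norm_of_nonneg (by positivity), pow_add]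
    calc c ^ i * c ^ (n + 1) * ‖D (i + (n + 1))‖ ≤ c ^ i * c ^ (n + 1) * 2 := by
          gcongr; exact hD _
      _ = 2 * c ^ (n + 1) * c ^ i := by ring
  obtain ⟨k, hk, hkD⟩ := T.exists_le_abs_fn_layer_sub ρ hρ hs ht hst
  have hfn : T.fn k (T.curve ρ s - T.curve ρ t) = c ^ n * T.fn k (D n) + T.fn k tail := by
    rw [hsplit, map_add, map_add, map_sum, sum_eq_zero fun i hi => ?_, zero_add, map_smul,
      smul_eq_mul]
    rw [map_smul, map_sub, T.fn_layer_eq_zero ρ (mem_range.1 hi) hk,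
      T.fn_layer_eq_zero ρ (mem_range.1 hi) hk, sub_zero, smul_zero]
  have hcn : 0 < c ^ n := by positivity
  have hlow : c ^ n / 8 ≤ |T.fn k (T.curve ρ s - T.curve ρ t)| := by
    rw [hfn]
    refine le_trans ?_ (abs_sub_abs_le_abs_add _ _)
    rw [abs_mul, abs_of_pos hcn]
    have hmain : c ^ n * (1 / 4) ≤ c ^ n * |T.fn k (D n)| := mul_le_mul_of_nonneg_left hkD hcn.le
    have htail' := T.abs_fn_le k tail
    clear_value c D tail
    linarith
  linarith [T.abs_fn_le k (T.curve ρ s - T.curve ρ t)]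

end TriangularSystem

section Thresholds

variable {ψ : ℝ → ℝ}

lemma exists_pos_tendsto_zero_forall_apply_le (hψ : Tendsto ψ (𝓝[>] 0) (𝓝 0)) {b : ℕ → ℝ}
    (hb : ∀ n, 0 < b n) :
    ∃ ρ : ℕ → ℝ, (∀ n, 0 < ρ n) ∧ Tendsto ρ atTop (𝓝 0) ∧ ∀ n, ψ (ρ n) ≤ b n := by
  have (n : ℕ) : ∃ r ∈ Ioo 0 ((2 : ℝ)⁻¹ ^ n), ψ r ≤ b n :=
    (Filter.Eventually.and (Ioo_mem_nhdsGT (by positivity))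
      (hψ.eventually (eventually_le_nhds (hb n)))).exists
  choose ρ hρ hψρ using this
  exact ⟨ρ, fun n => (hρ n).1, squeeze_zero (fun n => (hρ n).1.le) (fun n => (hρ n).2.le)
    (tendsto_pow_atTop_nhds_zero_of_lt_one (by norm_num) (by norm_num)), hψρ⟩

lemma MonotoneOn.exists_le_and_apply_le (hψ : MonotoneOn ψ (Ici 0)) {ρ b : ℕ → ℝ}
    (hρ : Tendsto ρ atTop (𝓝 0)) (hψρ : ∀ n, ψ (ρ n) ≤ b (n + 1)) (hψ₁ : ψ 1 ≤ b 0) {d : ℝ}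
    (hd₀ : 0 < d) (hd₁ : d ≤ 1) : ∃ n, ρ n ≤ d ∧ ψ d ≤ b n := by
  classical
  have hex : ∃ n, ρ n ≤ d := (hρ.eventually (eventually_le_nhds hd₀)).exists
  refine ⟨Nat.find hex, Nat.find_spec hex, ?_⟩
  rcases h : Nat.find hex with _ | n
  · exact (hψ hd₀.le (mem_Ici.2 zero_le_one) hd₁).trans hψ₁
  · have hd : d < ρ n := not_le.1 (Nat.find_min hex (h ▸ n.lt_succ_self))
    exact (hψ hd₀.le (hd₀.le.trans hd.le) hd.le).trans (hψρ n)

end Thresholds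

theorem statement8_general {X : Type*} [NormedAddCommGroup X] [NormedSpace ℝ X] [CompleteSpace X]
    (hX : ¬ FiniteDimensional ℝ X)
    (ψ : ℝ → ℝ) (hmono : ∀ s t : ℝ, 0 ≤ s → s ≤ t → ψ s ≤ ψ t)
    (hlim : Tendsto ψ (𝓝[>] (0 : ℝ)) (𝓝 0)) :
    ∃ f : ℝ → X, ContinuousOn f (Set.Icc 0 1) ∧
      ∀ s ∈ Set.Icc (0 : ℝ) 1, ∀ t ∈ Set.Icc (0 : ℝ) 1, ψ |s - t| ≤ ‖f s - f t‖ := by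
  obtain ⟨T⟩ := exists_triangularSystem hX
  set A : ℝ := 16 * (|ψ 1| + 1)
  have hA : 0 < A := by positivity
  set b : ℕ → ℝ := fun n => A * ((64 : ℝ)⁻¹ ^ n / 16)
  have hψ₁ : ψ 1 ≤ b 0 := by simp only [b, A, pow_zero]; linarith [le_abs_self (ψ 1)]
  obtain ⟨ρ, hρ₀, hρ, hψρ⟩ :=
    exists_pos_tendsto_zero_forall_apply_le hlim (b := fun n => b (n + 1)) fun n => by positivity
  refine ⟨A • T.curve ρ, ((T.continuous_curve ρ).const_smul A).continuousOn, ?_⟩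
  have key (s t : ℝ) (hs : 0 ≤ s) (ht : t ≤ 1) (hst : s ≤ t) :
      ψ (t - s) ≤ ‖A • T.curve ρ s - A • T.curve ρ t‖ := by
    rw [← smul_sub, norm_smul, Real.norm_of_nonneg hA.le]
    rcases hst.eq_or_lt with rfl | hlt
    · rw [sub_self, sub_self, norm_zero, mul_zero]
      exact ge_of_tendsto hlim (eventually_nhdsWithin_of_forall fun x hx => hmono 0 x le_rfl hx.le)
    obtain ⟨n, hρn, hψn⟩ := MonotoneOn.exists_le_and_apply_le
      (fun x hx y _ hxy => hmono x y hx hxy) hρ hψρ hψ₁ (sub_pos.2 hlt) (by linarith)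
    exact hψn.trans (mul_le_mul_of_nonneg_left
      (T.inv_pow_div_le_norm_curve_sub ρ (hρ₀ n) hs ht (by linarith)) hA.le)
  intro s hs t ht
  rcases le_total s t with hst | hts
  · rw [abs_sub_comm, abs_of_nonneg (sub_nonneg.2 hst)]
    exact key s t hs.1 ht.2 hst
  · rw [abs_of_nonneg (sub_nonneg.2 hts), norm_sub_rev]
    exact key t s ht.1 hs.2 hts

theorem statement8 {X : Type*} [NormedAddCommGroup X] [NormedSpace ℝ X] [CompleteSpace X]
    (hX : ¬ FiniteDimensional ℝ X)
    (ψ : ℝ → ℝ) (hmono : ∀ s t : ℝ, 0 ≤ s → s ≤ t → ψ s ≤ ψ t)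
    (hnonneg : ∀ s : ℝ, 0 ≤ s → 0 ≤ ψ s)
    (hlim : Tendsto ψ (𝓝[>] (0 : ℝ)) (𝓝 0)) :
    ∃ f : ℝ → X, ContinuousOn f (Set.Icc 0 1) ∧
      ∀ s ∈ Set.Icc (0 : ℝ) 1, ∀ t ∈ Set.Icc (0 : ℝ) 1, ψ |s - t| ≤ ‖f s - f t‖ :=
  statement8_general hX ψ hmono hlim
end

section
/- Let n ≥ 1, let ψ : [0,∞) → [0,∞) be an increasing function, and suppose f : [0,1] → ℝ^n is a continuous function satisfying ‖f(s) − f(t)‖ ≥ ψ(|s − t|) for all s, t ∈ [0,1]. Then for every ε > 0, liminf_{t → 0⁺} ψ(t) · t^{ε − 1/n} < ∞. -/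
open MeasureTheory Filter Set Metric
open scoped Topology ENNReal

lemma packing_aux {n : ℕ} (hn : 1 ≤ n) (N : ℕ) (hN : 1 ≤ N) (δ R : ℝ) (hδ : 0 < δ)
    (x : ℕ → EuclideanSpace ℝ (Fin n))
    (hx : ∀ k < N, ‖x k‖ ≤ R)
    (hsep : ∀ j < N, ∀ k < N, j ≠ k → δ ≤ ‖x j - x k‖) :
    (N : ℝ) * (δ/2)^n ≤ (R + δ/2)^n := by
  haveI : Nonempty (Fin n) := ⟨⟨0, hn⟩⟩
  haveI : Nontrivial (EuclideanSpace ℝ (Fin n)) := inferInstance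
  have hR0 : 0 ≤ R := le_trans (norm_nonneg _) (hx 0 hN)
  set r : ℝ := δ/2 with hr
  have hr0 : 0 < r := by positivity
  have hdisj : (↑(Finset.range N) : Set ℕ).Pairwise
      (Function.onFun Disjoint fun k => ball (x k) r) := by
    intro j hj k hk hjk
    simp only [Finset.coe_range, Set.mem_Iio] at hj hk
    apply ball_disjoint_ball
    rw [dist_eq_norm]
    calc r + r = δ := by ring
    _ ≤ ‖x j - x k‖ := hsep j hj k hk hjk
  have hsub : (⋃ k ∈ Finset.range N, ball (x k) r) ⊆ closedBall (0 : EuclideanSpace ℝ (Fin n)) (R + r) := by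
    intro y hy
    simp only [Set.mem_iUnion, Finset.mem_range] at hy
    obtain ⟨k, hk, hky⟩ := hy
    rw [mem_closedBall, dist_zero_right]
    calc ‖y‖ ≤ ‖y - x k‖ + ‖x k‖ := by simpa using norm_add_le (y - x k) (x k)
    _ ≤ r + R := add_le_add (le_of_lt (by rwa [mem_ball, dist_eq_norm] at hky)) (hx k hk)
    _ = R + r := by ring
  have hmeas := measure_biUnion_finset (μ := volume) hdisj (fun k _ => measurableSet_ball)
  have hle : ∑ k ∈ Finset.range N, volume (ball (x k) r)
      ≤ volume (closedBall (0 : EuclideanSpace ℝ (Fin n)) (R + r)) := by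
    rw [← hmeas]; exact measure_mono hsub
  have hfr : Module.finrank ℝ (EuclideanSpace ℝ (Fin n)) = n := finrank_euclideanSpace_fin
  set V := volume (ball (0 : EuclideanSpace ℝ (Fin n)) 1) with hV
  have hball : ∀ k, volume (ball (x k) r) = ENNReal.ofReal (r ^ n) * V := by
    intro k
    rw [Measure.addHaar_ball volume (x k) hr0.le, hfr]
  have hcb : volume (closedBall (0 : EuclideanSpace ℝ (Fin n)) (R + r))
      = ENNReal.ofReal ((R + r) ^ n) * V := by
    rw [Measure.addHaar_closedBall_eq_addHaar_ball,
      Measure.addHaar_ball volume _ (by positivity : (0:ℝ) ≤ R + r), hfr]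
  rw [hcb] at hle
  simp only [hball, Finset.sum_const, Finset.card_range, nsmul_eq_mul, ← mul_assoc] at hle
  have hV0 : V ≠ 0 := (measure_ball_pos volume _ one_pos).ne'
  have hVtop : V ≠ ⊤ := measure_ball_lt_top.ne
  have hle2 : (N : ℝ≥0∞) * ENNReal.ofReal (r ^ n) ≤ ENNReal.ofReal ((R + r) ^ n) :=
    (ENNReal.mul_le_mul_iff_left hV0 hVtop).mp hle
  have : ENNReal.ofReal ((N : ℝ) * r ^ n) ≤ ENNReal.ofReal ((R + r) ^ n) := by
    rwa [ENNReal.ofReal_mul (by positivity), ENNReal.ofReal_natCast]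
  exact (ENNReal.ofReal_le_ofReal_iff (by positivity)).mp this
open MeasureTheory Filter Set Metric
open scoped Topology ENNReal


theorem statement9 (n : ℕ) (hn : 1 ≤ n)
    (ψ : ℝ → ℝ) (hmono : ∀ s t : ℝ, 0 ≤ s → s ≤ t → ψ s ≤ ψ t)
    (hnonneg : ∀ s : ℝ, 0 ≤ s → 0 ≤ ψ s)
    (f : ℝ → EuclideanSpace ℝ (Fin n)) (hf : ContinuousOn f (Set.Icc 0 1))
    (hlow : ∀ s ∈ Set.Icc (0 : ℝ) 1, ∀ t ∈ Set.Icc (0 : ℝ) 1, ψ |s - t| ≤ ‖f s - f t‖)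
    (ε : ℝ) (hε : 0 < ε) :
    Filter.liminf (fun t : ℝ => ((ψ t * t ^ (ε - 1 / (n : ℝ)) : ℝ) : EReal)) (𝓝[>] (0 : ℝ)) < ⊤ := by
  have hn0 : (0:ℝ) < n := by exact_mod_cast hn
  -- bound on the image
  obtain ⟨R, hR⟩ := isBounded_iff_forall_norm_le.mp
    (isCompact_Icc.image_of_continuousOn hf).isBounded
  have hR' : ∀ s ∈ Set.Icc (0:ℝ) 1, ‖f s‖ ≤ R := fun s hs => hR _ ⟨s, hs, rfl⟩
  have hR0 : 0 ≤ R := le_trans (norm_nonneg _) (hR' 0 (by norm_num))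
  -- key estimate along the sequence 1/(N+1)
  have key : ∀ N : ℕ, ψ (1/((N:ℝ)+1)) * (1/((N:ℝ)+1)) ^ (ε - 1/(n:ℝ)) ≤ 4*R := by
    intro N
    set M : ℕ := N + 1 with hM
    have hM1 : (1:ℝ) ≤ (M:ℝ) := by exact_mod_cast Nat.one_le_iff_ne_zero.mpr (by omega)
    have hM0 : (0:ℝ) < (M:ℝ) := by linarith
    have hMmem : (1/(M:ℝ)) ∈ Set.Icc (0:ℝ) 1 := by
      constructor <;> [positivity; exact (div_le_one hM0).mpr hM1]
    set δ : ℝ := ψ (1/(M:ℝ)) with hδdef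
    have hδ0 : 0 ≤ δ := hnonneg _ hMmem.1
    have hMcast : ((N:ℝ)+1) = (M:ℝ) := by push_cast [hM]; ring
    rw [hMcast]
    rcases eq_or_lt_of_le hδ0 with h0 | hδpos
    · rw [← hδdef, ← h0, zero_mul]; positivity
    -- separation of the points f(k/M)
    have hmem : ∀ k < M, ((k:ℝ)/M) ∈ Set.Icc (0:ℝ) 1 := by
      intro k hk
      constructor
      · positivity
      · apply div_le_one_of_le₀ _ hM0.le
        exact_mod_cast hk.le
    have hsep : ∀ j < M, ∀ k < M, j ≠ k → δ ≤ ‖f ((j:ℝ)/M) - f ((k:ℝ)/M)‖ := by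
      intro j hj k hk hjk
      have h1 : (1:ℝ) ≤ |(j:ℝ) - (k:ℝ)| := by
        have : (1:ℤ) ≤ |(j:ℤ) - (k:ℤ)| :=
          Int.one_le_abs (sub_ne_zero.mpr (by exact_mod_cast hjk))
        calc (1:ℝ) ≤ ((|(j:ℤ) - (k:ℤ)| : ℤ) : ℝ) := by exact_mod_cast this
        _ = |(j:ℝ) - (k:ℝ)| := by push_cast; ring_nf
      have habs : |(j:ℝ)/M - (k:ℝ)/M| = |(j:ℝ) - (k:ℝ)|/M := by
        rw [div_sub_div_same, abs_div, abs_of_pos hM0]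
      calc δ ≤ ψ (|(j:ℝ) - (k:ℝ)|/M) := hmono _ _ (by positivity) (by gcongr)
      _ = ψ |(j:ℝ)/M - (k:ℝ)/M| := by rw [habs]
      _ ≤ ‖f ((j:ℝ)/M) - f ((k:ℝ)/M)‖ := hlow _ (hmem j hj) _ (hmem k hk)
    -- packing bound
    have hpack := packing_aux hn M (by omega) δ R hδpos
      (fun k => f ((k:ℝ)/M)) (fun k hk => hR' _ (hmem k hk)) hsep
    -- δ ≤ 2R
    have hδ2R : δ ≤ 2*R := by
      have h1 : ψ 1 ≤ ‖f 1 - f 0‖ := by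
        have := hlow 1 (by norm_num) 0 (by norm_num)
        simpa using this
      have h2 : ‖f 1 - f 0‖ ≤ 2*R := by
        calc ‖f 1 - f 0‖ ≤ ‖f 1‖ + ‖f 0‖ := norm_sub_le _ _
        _ ≤ R + R := add_le_add (hR' 1 (by norm_num)) (hR' 0 (by norm_num))
        _ = 2*R := by ring
      calc δ ≤ ψ 1 := hmono _ _ hMmem.1 hMmem.2
      _ ≤ 2*R := h1.trans h2
    have hpack2 : (M:ℝ) * (δ/2)^n ≤ (2*R)^n := by
      refine hpack.trans (pow_le_pow_left₀ (by positivity) (by linarith) n)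
    -- extract the n-th root: δ/2 * M^(1/n) ≤ 2R
    have hroot : δ/2 * (M:ℝ) ^ ((1:ℝ)/n) ≤ 2*R := by
      apply le_of_pow_le_pow_left₀ (by omega : n ≠ 0) (by positivity)
      have hMpow : ((M:ℝ) ^ ((1:ℝ)/n))^n = (M:ℝ) := by
        rw [← Real.rpow_natCast ((M:ℝ) ^ ((1:ℝ)/n)) n, ← Real.rpow_mul hM0.le]
        rw [one_div_mul_cancel (by positivity : (n:ℝ) ≠ 0), Real.rpow_one]
      calc (δ/2 * (M:ℝ) ^ ((1:ℝ)/n))^n = (δ/2)^n * ((M:ℝ) ^ ((1:ℝ)/n))^n := mul_pow _ _ _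
      _ = (M:ℝ) * (δ/2)^n := by rw [hMpow]; ring
      _ ≤ (2*R)^n := hpack2
    have hδM : δ * (M:ℝ) ^ ((1:ℝ)/n) ≤ 4*R := by nlinarith [Real.rpow_nonneg hM0.le ((1:ℝ)/n)]
    -- conclude
    have hrw : (1/(M:ℝ)) ^ (ε - 1/(n:ℝ)) = (M:ℝ) ^ ((1:ℝ)/n) * (M:ℝ) ^ (-ε) := by
      rw [one_div, Real.inv_rpow hM0.le, ← Real.rpow_neg hM0.le,
        show -(ε - 1/(n:ℝ)) = 1/(n:ℝ) + (-ε) by ring, Real.rpow_add hM0]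
    calc δ * (1/(M:ℝ)) ^ (ε - 1/(n:ℝ)) = (δ * (M:ℝ)^((1:ℝ)/n)) * (M:ℝ)^(-ε) := by
          rw [hrw]; ring
    _ ≤ (4*R) * 1 := by
        apply mul_le_mul hδM (Real.rpow_le_one_of_one_le_of_nonpos hM1 (by linarith))
          (by positivity) (by positivity)
    _ = 4*R := mul_one _
  -- pass to the liminf
  have htend : Tendsto (fun N : ℕ => 1/((N:ℝ)+1)) atTop (𝓝[>] (0:ℝ)) := by
    apply tendsto_nhdsWithin_of_tendsto_nhds_of_eventually_within
    · exact tendsto_one_div_add_atTop_nhds_zero_nat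
    · exact Eventually.of_forall fun N => Set.mem_Ioi.mpr (by positivity)
  set g : ℝ → EReal := fun t : ℝ => ((ψ t * t ^ (ε - 1 / (n : ℝ)) : ℝ) : EReal) with hgdef
  calc liminf g (𝓝[>] (0:ℝ)) ≤ liminf g (Filter.map (fun N : ℕ => 1/((N:ℝ)+1)) atTop) :=
      liminf_le_liminf_of_le htend
  _ ≤ ((4*R : ℝ) : EReal) := by
      apply liminf_le_of_frequently_le'
      rw [Filter.frequently_map]
      refine Frequently.of_forall fun N => ?_
      simp only [hgdef]
      exact EReal.coe_le_coe_iff.mpr (key N)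
  _ < ⊤ := EReal.coe_lt_top _
end

section
/- Let 1 ≤ p ≤ ∞, let X be a real Banach space in which ℓ_p is finitely representable, and let Y be a closed subspace of X of finite codimension. Then ℓ_p is finitely representable in Y. -/
open MeasureTheory Filter Set
open scoped ENNReal Topology

/-- `ℓ_p` is finitely representable in `X`: for every `n` and every `λ > 1` there are an
`n`-dimensional subspace `E` of `X` and a linear isomorphism `T : ℓ_p^n → E` with
`‖T‖ · ‖T⁻¹‖ < λ`. -/
def LpFinRep (p : ℝ≥0∞) [Fact (1 ≤ p)] (X : Type*) [NormedAddCommGroup X]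
    [NormedSpace ℝ X] : Prop :=
  ∀ (n : ℕ) (lam : ℝ), 0 < n → 1 < lam →
    ∃ E : Submodule ℝ X, Module.finrank ℝ E = n ∧
      ∃ T : PiLp p (fun _ : Fin n => ℝ) ≃L[ℝ] E,
        ‖(T : PiLp p (fun _ : Fin n => ℝ) →L[ℝ] E)‖ *
          ‖(T.symm : E →L[ℝ] PiLp p (fun _ : Fin n => ℝ))‖ < lam

-- aux: norms agree componentwise ⇒ PiLp norms agree
lemma piLp_norm_congr {p : ℝ≥0∞} [Fact (1 ≤ p)] {ι : Type*} [Fintype ι]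
    {E F : ι → Type*} [∀ i, SeminormedAddCommGroup (E i)] [∀ i, SeminormedAddCommGroup (F i)]
    (x : PiLp p E) (y : PiLp p F) (h : ∀ i, ‖x i‖ = ‖y i‖) : ‖x‖ = ‖y‖ := by
  rcases eq_or_ne p ⊤ with rfl | hp
  · rw [PiLp.norm_eq_ciSup, PiLp.norm_eq_ciSup]
    simp_rw [h]
  · have hp0 : 0 < p.toReal :=
      ENNReal.toReal_pos (zero_lt_one.trans_le (Fact.out : 1 ≤ p)).ne' hp
    rw [PiLp.norm_eq_sum hp0, PiLp.norm_eq_sum hp0]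
    simp_rw [h]


theorem statement11 (p : ℝ≥0∞) [Fact (1 ≤ p)]
    {X : Type*} [NormedAddCommGroup X] [NormedSpace ℝ X] [CompleteSpace X]
    (hrep : LpFinRep p X)
    (Y : Submodule ℝ X) (hYclosed : IsClosed (Y : Set X))
    (hYcodim : FiniteDimensional ℝ (X ⧸ Y)) :
    LpFinRep p Y := by
  intro n lam hn hlam
  set k : ℕ := Module.finrank ℝ (X ⧸ Y) with hk
  set K : ℕ := k + 1 with hK
  set m : ℕ := n * K with hm
  obtain ⟨E, hE, T, hT⟩ := hrep m lam (Nat.mul_pos hn (Nat.succ_pos k)) hlam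
  -- index juggling
  let eκ : (Σ _ : Fin n, Fin K) ≃ Fin m :=
    (Equiv.sigmaEquivProd (Fin n) (Fin K)).trans finProdFinEquiv
  let Iso : PiLp p (fun _ : Σ _ : Fin n, Fin K => ℝ) ≃ₗᵢ[ℝ] PiLp p (fun _ : Fin m => ℝ) :=
    LinearIsometryEquiv.piLpCongrLeft p ℝ ℝ eκ
  let Curry : PiLp p (fun _ : Σ _ : Fin n, Fin K => ℝ) ≃ₗᵢ[ℝ]
      PiLp p (fun _ : Fin n => PiLp p (fun _ : Fin K => ℝ)) :=
    LinearIsometryEquiv.piLpCurry ℝ p (fun (_ : Fin n) (_ : Fin K) => ℝ)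
  -- the map to X and to the quotient
  let B0 : PiLp p (fun _ : Σ _ : Fin n, Fin K => ℝ) →ₗ[ℝ] X :=
    E.subtype ∘ₗ ((T : PiLp p (fun _ : Fin m => ℝ) →L[ℝ] E) :
      PiLp p (fun _ : Fin m => ℝ) →ₗ[ℝ] E) ∘ₗ Iso.toLinearEquiv.toLinearMap
  let Φ : PiLp p (fun _ : Σ _ : Fin n, Fin K => ℝ) →ₗ[ℝ] X ⧸ Y := Y.mkQ ∘ₗ B0
  -- block inclusion maps
  let ι2 : (∀ _ : Fin n, PiLp p (fun _ : Fin K => ℝ)) ≃ₗ[ℝ]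
      PiLp p (fun _ : Fin n => PiLp p (fun _ : Fin K => ℝ)) :=
    (WithLp.linearEquiv p ℝ _).symm
  let blk : Fin n → (PiLp p (fun _ : Fin K => ℝ) →ₗ[ℝ]
      PiLp p (fun _ : Σ _ : Fin n, Fin K => ℝ)) := fun j =>
    Curry.symm.toLinearEquiv.toLinearMap ∘ₗ ι2.toLinearMap ∘ₗ
      LinearMap.single ℝ (fun _ : Fin n => PiLp p (fun _ : Fin K => ℝ)) j
  let Ψ : Fin n → (PiLp p (fun _ : Fin K => ℝ) →ₗ[ℝ] X ⧸ Y) := fun j => Φ ∘ₗ blk j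
  -- find unit vectors in the kernels
  haveI : FiniteDimensional ℝ (PiLp p (fun _ : Fin K => ℝ)) :=
    LinearEquiv.finiteDimensional (WithLp.linearEquiv p ℝ (Fin K → ℝ)).symm
  have hker : ∀ j : Fin n, ∃ w : PiLp p (fun _ : Fin K => ℝ), ‖w‖ = 1 ∧ Ψ j w = 0 := by
    intro j
    have hne : LinearMap.ker (Ψ j) ≠ ⊥ := by
      intro hbot
      have hinj : Function.Injective (Ψ j) := LinearMap.ker_eq_bot.mp hbot
      have h1 : Module.finrank ℝ (PiLp p (fun _ : Fin K => ℝ)) ≤ k :=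
        hk ▸ LinearMap.finrank_le_finrank_of_injective hinj
      have h2 : Module.finrank ℝ (PiLp p (fun _ : Fin K => ℝ)) = K :=
        (WithLp.linearEquiv p ℝ (Fin K → ℝ)).finrank_eq.trans (Module.finrank_fin_fun ℝ)
      omega
    obtain ⟨w, hwmem, hw0⟩ := Submodule.exists_mem_ne_zero_of_ne_bot hne
    refine ⟨‖w‖⁻¹ • w, ?_, ?_⟩
    · rw [norm_smul, norm_inv, norm_norm, inv_mul_cancel₀ (norm_ne_zero_iff.mpr hw0)]
    · rw [_root_.map_smul, LinearMap.mem_ker.mp hwmem, smul_zero]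
  choose w hw1 hw2 using hker
  -- the isometric block-diagonal map
  let g : PiLp p (fun _ : Fin n => ℝ) →ₗ[ℝ] PiLp p (fun _ : Σ _ : Fin n, Fin K => ℝ) :=
    ∑ j : Fin n, ((LinearMap.proj j ∘ₗ (WithLp.linearEquiv p ℝ (Fin n → ℝ)).toLinearMap :
      PiLp p (fun _ : Fin n => ℝ) →ₗ[ℝ] ℝ).smulRight ((blk j) (w j)))
  have hg_apply : ∀ c : PiLp p (fun _ : Fin n => ℝ), g c = ∑ j : Fin n, c j • (blk j) (w j) := by
    intro c
    simp [g, LinearMap.sum_apply]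
  have hg_eq : ∀ c : PiLp p (fun _ : Fin n => ℝ),
      g c = Curry.symm (ι2 (fun j => c j • w j)) := by
    intro c
    rw [hg_apply]
    have : (fun j => c j • w j) = ∑ j : Fin n, Pi.single j (c j • w j) :=
      (Finset.univ_sum_single _).symm
    rw [this, map_sum, map_sum]
    refine Finset.sum_congr rfl fun j _ => ?_
    rw [Pi.single_smul, _root_.map_smul, _root_.map_smul]
    rfl
  have hg_norm : ∀ c : PiLp p (fun _ : Fin n => ℝ), ‖g c‖ = ‖c‖ := by
    intro c
    rw [hg_eq, Curry.symm.norm_map]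
    refine piLp_norm_congr _ c fun j => ?_
    show ‖c j • w j‖ = ‖c j‖
    rw [norm_smul, hw1, mul_one, Real.norm_eq_abs]
  have hΦg : ∀ c, Φ (g c) = 0 := by
    intro c
    rw [hg_apply, map_sum]
    simp only [_root_.map_smul]
    have : ∀ j : Fin n, Φ ((blk j) (w j)) = 0 := fun j => hw2 j
    simp [this]
  -- the final embedding
  have hmemY : ∀ c, B0 (g c) ∈ Y := by
    intro c
    have : Y.mkQ (B0 (g c)) = 0 := hΦg c
    rwa [Submodule.mkQ_apply, Submodule.Quotient.mk_eq_zero] at this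
  let A : PiLp p (fun _ : Fin n => ℝ) →ₗ[ℝ] Y :=
    LinearMap.codRestrict Y (B0 ∘ₗ g) hmemY
  have hB0 : ∀ x, B0 x = (T (Iso x) : X) := fun x => rfl
  have hA_norm_le : ∀ c, ‖A c‖ ≤
      ‖(T : PiLp p (fun _ : Fin m => ℝ) →L[ℝ] E)‖ * ‖c‖ := by
    intro c
    have h1 : ‖A c‖ = ‖(T (Iso (g c)) : X)‖ := rfl
    rw [h1]
    calc ‖(T (Iso (g c)) : X)‖ = ‖T (Iso (g c))‖ := rfl
      _ ≤ ‖(T : PiLp p (fun _ : Fin m => ℝ) →L[ℝ] E)‖ * ‖Iso (g c)‖ :=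
          (T : PiLp p (fun _ : Fin m => ℝ) →L[ℝ] E).le_opNorm _
      _ = ‖(T : PiLp p (fun _ : Fin m => ℝ) →L[ℝ] E)‖ * ‖c‖ := by
          rw [Iso.norm_map, hg_norm]
  have hA_norm_ge : ∀ c, ‖c‖ ≤
      ‖(T.symm : E →L[ℝ] PiLp p (fun _ : Fin m => ℝ))‖ * ‖A c‖ := by
    intro c
    have h1 : ‖A c‖ = ‖T (Iso (g c))‖ := rfl
    calc ‖c‖ = ‖Iso (g c)‖ := by rw [Iso.norm_map, hg_norm]
      _ = ‖T.symm (T (Iso (g c)))‖ := by rw [T.symm_apply_apply]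
      _ ≤ ‖(T.symm : E →L[ℝ] PiLp p (fun _ : Fin m => ℝ))‖ * ‖T (Iso (g c))‖ :=
          (T.symm : E →L[ℝ] PiLp p (fun _ : Fin m => ℝ)).le_opNorm _
      _ = ‖(T.symm : E →L[ℝ] PiLp p (fun _ : Fin m => ℝ))‖ * ‖A c‖ := by rw [h1]
  have hAinj : Function.Injective A := by
    intro c d hcd
    rw [← sub_eq_zero, ← norm_eq_zero]
    have h0 : A (c - d) = 0 := by rw [map_sub, hcd, sub_self]
    have := hA_norm_ge (c - d)
    rw [h0, norm_zero, mul_zero] at this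
    exact le_antisymm this (norm_nonneg _)
  haveI : FiniteDimensional ℝ (PiLp p (fun _ : Fin n => ℝ)) :=
    LinearEquiv.finiteDimensional (WithLp.linearEquiv p ℝ (Fin n → ℝ)).symm
  let F : Submodule ℝ Y := LinearMap.range A
  refine ⟨F, ?_, ?_⟩
  · rw [LinearMap.finrank_range_of_inj hAinj,
      (WithLp.linearEquiv p ℝ (Fin n → ℝ)).finrank_eq, Module.finrank_fin_fun]
  · let eL : PiLp p (fun _ : Fin n => ℝ) ≃ₗ[ℝ] F := LinearEquiv.ofInjective A hAinj
    let U : PiLp p (fun _ : Fin n => ℝ) ≃L[ℝ] F := eL.toContinuousLinearEquiv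
    have hUapp : ∀ c, ((U c : Y) : X) = ((A c : Y) : X) := fun c => rfl
    have hUnorm : ∀ c, ‖U c‖ = ‖A c‖ := fun c => rfl
    refine ⟨U, ?_⟩
    have hU1 : ‖(U : PiLp p (fun _ : Fin n => ℝ) →L[ℝ] F)‖ ≤
        ‖(T : PiLp p (fun _ : Fin m => ℝ) →L[ℝ] E)‖ := by
      refine ContinuousLinearMap.opNorm_le_bound _ (ContinuousLinearMap.opNorm_nonneg _) fun c => ?_
      rw [show (U : PiLp p (fun _ : Fin n => ℝ) →L[ℝ] F) c = U c from rfl, hUnorm]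
      exact hA_norm_le c
    have hU2 : ‖(U.symm : F →L[ℝ] PiLp p (fun _ : Fin n => ℝ))‖ ≤
        ‖(T.symm : E →L[ℝ] PiLp p (fun _ : Fin m => ℝ))‖ := by
      refine ContinuousLinearMap.opNorm_le_bound _ (ContinuousLinearMap.opNorm_nonneg _) fun y => ?_
      have hy : y = U (U.symm y) := (U.apply_symm_apply y).symm
      rw [show (U.symm : F →L[ℝ] PiLp p (fun _ : Fin n => ℝ)) y = U.symm y from rfl]
      calc ‖U.symm y‖ ≤ ‖(T.symm : E →L[ℝ] PiLp p (fun _ : Fin m => ℝ))‖ *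
            ‖A (U.symm y)‖ := hA_norm_ge _
        _ = ‖(T.symm : E →L[ℝ] PiLp p (fun _ : Fin m => ℝ))‖ * ‖y‖ := by
            rw [← hUnorm, U.apply_symm_apply]
    calc ‖(U : PiLp p (fun _ : Fin n => ℝ) →L[ℝ] F)‖ *
          ‖(U.symm : F →L[ℝ] PiLp p (fun _ : Fin n => ℝ))‖
        ≤ ‖(T : PiLp p (fun _ : Fin m => ℝ) →L[ℝ] E)‖ *
          ‖(T.symm : E →L[ℝ] PiLp p (fun _ : Fin m => ℝ))‖ :=
          mul_le_mul hU1 hU2 (ContinuousLinearMap.opNorm_nonneg _) (ContinuousLinearMap.opNorm_nonneg _)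
      _ < lam := hT
end
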